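/- arXiv:2101.11075 — 4 statements merged into one kernel-verified Lean document; each statement's English description precedes it below -/
import Mathlib

section
/- (Lyapunov step, base case.) The first MADGRAD step satisfies V_{a_1}(−s_1) ≤ (λ_0² / 2) · ∑_{d=1}^{D} g_{0,d}² / a_{0,d}, where a_k denotes the componentwise denominator vector a_k := (λ_k G² + v_k)^{1/3} (so a_0 has every entry equal to (λ_0 G²)^{1/3}). -/
/-!
The support function of the quadratic `½‖x - x₀‖²_b` splits over coordinates, and in each
coordinate `u t - ½ b t² ≤ u² / (2b)` by completing the square. For `u = -s₁ = -λ₀ g₀` this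
gives `V_{a₁}(-s₁) ≤ (λ₀²/2) ∑ g₀²/a₁`, and `a₁ ≥ a₀ > 0` because the step sizes `λ_k` increase.
-/

open Finset
open scoped RealInnerProductSpace

lemma mul_sub_half_mul_sq_le_sq_div {b : ℝ} (hb : 0 < b) (u t : ℝ) :
    u * t - 1 / 2 * (b * t ^ 2) ≤ u ^ 2 / (2 * b) := by
  rw [le_div_iff₀ (by positivity)]
  nlinarith [sq_nonneg (b * t - u)]

section QuadraticConjugate

variable {ι : Type*} [Fintype ι]

noncomputable def quadraticConjugate (b : ι → ℝ) (x₀ u : EuclideanSpace ℝ ι) : ℝ :=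
  ⨆ x : EuclideanSpace ℝ ι, (⟪u, x - x₀⟫ - (1 / 2) * ∑ d, b d * (x d - x₀ d) ^ 2)

lemma quadraticConjugate_le {b : ι → ℝ} (hb : ∀ d, 0 < b d) (x₀ u : EuclideanSpace ℝ ι) :
    quadraticConjugate b x₀ u ≤ ∑ d, u d ^ 2 / (2 * b d) := by
  refine ciSup_le fun x => ?_
  have hinner : ⟪u, x - x₀⟫ = ∑ d, u d * (x d - x₀ d) := by
    simp only [PiLp.inner_apply, PiLp.sub_apply, RCLike.inner_apply, conj_trivial, mul_comm]
  rw [hinner, mul_sum, ← sum_sub_distrib]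
  exact sum_le_sum fun d _ => mul_sub_half_mul_sq_le_sq_div (hb d) _ _

end QuadraticConjugate

theorem madgrad_lyapunov_base_general (D : ℕ) (G γ : ℝ) (hG : 0 < G)
    (hγ : 0 < γ) (x0 : EuclideanSpace ℝ (Fin D))
    -- support-type function
    (V : (Fin D → ℝ) → EuclideanSpace ℝ (Fin D) → ℝ)
    (hV : ∀ (b : Fin D → ℝ) (u : EuclideanSpace ℝ (Fin D)),
      V b u = ⨆ x : EuclideanSpace ℝ (Fin D),
        (⟪u, x - x0⟫ - (1 / 2) * ∑ d : Fin D, b d * (x d - x0 d) ^ 2))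
    -- step-size and momentum sequences
    (lam : ℕ → ℝ)
    (hlam : ∀ k : ℕ, lam k = γ * Real.sqrt ((k : ℝ) + 1))
    (x : ℕ → EuclideanSpace ℝ (Fin D))
    (s v : ℕ → EuclideanSpace ℝ (Fin D)) (a : ℕ → Fin D → ℝ)
    (g : ℕ → EuclideanSpace ℝ (Fin D))
    -- the MADGRAD recursion
    (hs0 : s 0 = 0) (hv0 : v 0 = 0)
    (hs : ∀ k : ℕ, s (k + 1) = s k + lam k • g k)
    (hv : ∀ (k : ℕ) (d : Fin D), v (k + 1) d = v k d + lam k * (g k d) ^ 2)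
    (ha : ∀ (k : ℕ) (d : Fin D), a k d = (lam k * G ^ 2 + v k d) ^ ((1 : ℝ) / 3)) :
    V (a 1) (-(s 1)) ≤ (lam 0) ^ 2 / 2 * ∑ d : Fin D, (g 0 d) ^ 2 / a 0 d := by
  have hlam0 : lam 0 = γ := by simp [hlam]
  have hγ_le_lam1 : γ ≤ lam 1 := by
    rw [hlam]
    exact le_mul_of_one_le_right hγ.le (Real.one_le_sqrt.mpr (by norm_num))
  have hv0d : ∀ d, v 0 d = 0 := fun d => by simp [hv0]
  have hv1d : ∀ d, v 1 d = lam 0 * g 0 d ^ 2 := fun d => by simp [hv, hv0d]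
  have ha0 : ∀ d, 0 < a 0 d := fun d => by rw [ha, hv0d, hlam0]; positivity
  have ha01 : ∀ d, a 0 d ≤ a 1 d := fun d => by
    rw [ha, ha, hv1d, hv0d, hlam0]
    gcongr
    positivity
  have hs1 : ∀ d, (-(s 1)) d = -(lam 0 * g 0 d) := fun d => by simp [hs, hs0]
  calc V (a 1) (-(s 1)) ≤ ∑ d, (-(s 1)) d ^ 2 / (2 * a 1 d) :=
        (hV _ _).trans_le (quadraticConjugate_le (fun d => (ha0 d).trans_le (ha01 d)) x0 _)
    _ ≤ ∑ d, lam 0 ^ 2 / 2 * (g 0 d ^ 2 / a 0 d) := sum_le_sum fun d _ => by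
        rw [hs1, neg_sq, mul_pow]
        calc lam 0 ^ 2 * g 0 d ^ 2 / (2 * a 1 d) ≤ lam 0 ^ 2 * g 0 d ^ 2 / (2 * a 0 d) := by
              gcongr; exacts [mul_pos two_pos (ha0 d), ha01 d]
          _ = lam 0 ^ 2 / 2 * (g 0 d ^ 2 / a 0 d) := by ring
    _ = lam 0 ^ 2 / 2 * ∑ d, g 0 d ^ 2 / a 0 d := (mul_sum ..).symm

/-- Lyapunov step, base case: the first MADGRAD step satisfies
`V_{a_1}(−s_1) ≤ (λ_0²/2) ∑_d g_{0,d}²/a_{0,d}`, where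
`a_k := (λ_k G² + v_k)^{1/3}` componentwise. -/
theorem madgrad_lyapunov_base (D : ℕ) (hD : 1 ≤ D) (G γ : ℝ) (hG : 0 < G)
    (hγ : 0 < γ) (x0 : EuclideanSpace ℝ (Fin D))
    -- support-type function
    (V : (Fin D → ℝ) → EuclideanSpace ℝ (Fin D) → ℝ)
    (hV : ∀ (b : Fin D → ℝ) (u : EuclideanSpace ℝ (Fin D)),
      V b u = ⨆ x : EuclideanSpace ℝ (Fin D),
        (⟪u, x - x0⟫ - (1 / 2) * ∑ d : Fin D, b d * (x d - x0 d) ^ 2))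
    -- step-size and momentum sequences
    (lam c : ℕ → ℝ)
    (hlam : ∀ k : ℕ, lam k = γ * Real.sqrt ((k : ℝ) + 1))
    (hc : ∀ k : ℕ, c k = (3 / 2) / ((k : ℝ) + 3 / 2))
    -- convex losses and subgradients
    (f : ℕ → EuclideanSpace ℝ (Fin D) → ℝ)
    (hf : ∀ k, ConvexOn ℝ Set.univ (f k))
    (x z : ℕ → EuclideanSpace ℝ (Fin D))
    (s v : ℕ → EuclideanSpace ℝ (Fin D)) (a : ℕ → Fin D → ℝ)
    (g : ℕ → EuclideanSpace ℝ (Fin D))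
    (hg_subgrad : ∀ k, ∀ y : EuclideanSpace ℝ (Fin D),
      f k (x k) + ⟪g k, y - x k⟫ ≤ f k y)
    (hg_bound : ∀ k, ∀ d : Fin D, |g k d| ≤ G)
    -- the MADGRAD recursion
    (hx0 : x 0 = x0) (hs0 : s 0 = 0) (hv0 : v 0 = 0)
    (hs : ∀ k : ℕ, s (k + 1) = s k + lam k • g k)
    (hv : ∀ (k : ℕ) (d : Fin D), v (k + 1) d = v k d + lam k * (g k d) ^ 2)
    (ha : ∀ (k : ℕ) (d : Fin D), a k d = (lam k * G ^ 2 + v k d) ^ ((1 : ℝ) / 3))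
    (hz : ∀ (k : ℕ) (d : Fin D), z (k + 1) d = x0 d - s (k + 1) d / a (k + 1) d)
    (hx : ∀ k : ℕ, x (k + 1) = (1 - c (k + 1)) • x k + c (k + 1) • z (k + 1)) :
    V (a 1) (-(s 1)) ≤ (lam 0) ^ 2 / 2 * ∑ d : Fin D, (g 0 d) ^ 2 / a 0 d :=
  madgrad_lyapunov_base_general D G γ hG hγ x0 V hV lam hlam x s v a g hs0 hv0 hs hv ha
end

section
/- (Lyapunov step, inductive case.) For every integer k ≥ 1 and every x_* ∈ ℝ^D, the MADGRAD quantities satisfy V_{a_{k+1}}(−s_{k+1}) ≤ V_{a_k}(−s_k) + (λ_k² / 2) ∑_{d=1}^{D} g_{k,d}² / a_{k,d} + λ_k ⟨g_k, x_0 − x_*⟩ − (λ_k / c_k) (f_k(x_k) − f_k(x_*)) + λ_k ((1 − c_k)/c_k) (f_k(x_{k−1}) − f_k(x_*)). -/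
/-!
For positive weights `b` the supremum defining `V_b(u)` is attained and equals
`½ ∑ u_d² / b_d`. The weights `a_k` are nondecreasing in `k`, so `V_{a_{k+1}}(-s_{k+1})` is at most
`½ ∑ s_{k+1,d}² / a_{k,d}`; expanding `s_{k+1} = s_k + λ_k g_k` produces `V_{a_k}(-s_k)`, the
quadratic term, and the cross term `λ_k ⟨g_k, x_0 - z_k⟩` because `z_k = x_0 - s_k / a_k`.
Finally `c_k z_k = x_k - (1 - c_k) x_{k-1}`, so testing the subgradient inequality at `x_k` against
`x_*` and `x_{k-1}` bounds `⟨g_k, x_* - z_k⟩` by the function-value terms.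
-/

open Finset
open scoped RealInnerProductSpace

lemma EuclideanSpace.real_inner_eq_sum_mul {ι : Type*} [Fintype ι] (u w : EuclideanSpace ℝ ι) :
    ⟪u, w⟫ = ∑ i, u i * w i := by
  simp [PiLp.inner_apply, mul_comm]

lemma mul_sub_half_mul_sq_le {b : ℝ} (hb : 0 < b) (u t : ℝ) :
    u * t - 1 / 2 * (b * t ^ 2) ≤ 1 / 2 * (u ^ 2 / b) := by
  have hsq : 0 ≤ (u - b * t) ^ 2 / b := by positivity
  have hexpand : (u - b * t) ^ 2 / b = u ^ 2 / b - 2 * u * t + b * t ^ 2 := by field_simp; ring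
  linarith

/-- The supremum is attained at `x = x₀ + u / b`. -/
theorem iSup_inner_sub_half_weighted_sq {ι : Type*} [Fintype ι] (x₀ u : EuclideanSpace ℝ ι)
    {b : ι → ℝ} (hb : ∀ i, 0 < b i) :
    ⨆ x : EuclideanSpace ℝ ι, (⟪u, x - x₀⟫ - 1 / 2 * ∑ i, b i * (x i - x₀ i) ^ 2) =
      1 / 2 * ∑ i, u i ^ 2 / b i := by
  have hle : ∀ x : EuclideanSpace ℝ ι,
      ⟪u, x - x₀⟫ - 1 / 2 * ∑ i, b i * (x i - x₀ i) ^ 2 ≤ 1 / 2 * ∑ i, u i ^ 2 / b i := by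
    intro x
    simp only [EuclideanSpace.real_inner_eq_sum_mul, mul_sum, ← sum_sub_distrib, PiLp.sub_apply]
    exact sum_le_sum fun i _ => mul_sub_half_mul_sq_le (hb i) _ _
  refine le_antisymm (ciSup_le hle) (le_ciSup_of_le ⟨_, Set.forall_mem_range.2 hle⟩
    (x₀ + WithLp.toLp 2 (fun i => u i / b i)) (le_of_eq ?_))
  simp only [EuclideanSpace.real_inner_eq_sum_mul, mul_sum, ← sum_sub_distrib,
    PiLp.add_apply, add_sub_cancel_left]
  refine sum_congr rfl fun i _ => ?_
  field_simp [(hb i).ne']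
  ring

lemma half_sum_sq_add_smul_div {ι : Type*} [Fintype ι] (s g x₀ z : EuclideanSpace ℝ ι)
    (a : ι → ℝ) (l : ℝ) (hz : ∀ i, z i = x₀ i - s i / a i) :
    1 / 2 * ∑ i, (s + l • g) i ^ 2 / a i =
      1 / 2 * ∑ i, s i ^ 2 / a i + l * ⟪g, x₀ - z⟫ + l ^ 2 / 2 * ∑ i, g i ^ 2 / a i := by
  simp only [EuclideanSpace.real_inner_eq_sum_mul, mul_sum, ← sum_add_distrib, PiLp.sub_apply,
    PiLp.add_apply, PiLp.smul_apply, hz, smul_eq_mul]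
  refine sum_congr rfl fun i _ => ?_
  ring

lemma inner_sub_le_of_subgradient_of_eq_convexComb {E : Type*} [NormedAddCommGroup E]
    [InnerProductSpace ℝ E] {f : E → ℝ} {g x x' y z : E} {c : ℝ} (hc₀ : 0 < c) (hc₁ : c ≤ 1)
    (hg : ∀ w, f x' + ⟪g, w - x'⟫ ≤ f w) (hx' : x' = (1 - c) • x + c • z) :
    ⟪g, y - z⟫ ≤ -(1 / c) * (f x' - f y) + (1 - c) / c * (f x - f y) := by
  have hyz : c • (y - z) = c • (y - x') + (1 - c) • (x - x') := by
    rw [hx']; module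
  have hmul : c * ⟪g, y - z⟫ ≤ c * (f y - f x') + (1 - c) * (f x - f x') := by
    rw [← real_inner_smul_right, hyz, inner_add_right, real_inner_smul_right,
      real_inner_smul_right]
    gcongr <;> linarith [hg y, hg x]
  refine le_of_mul_le_mul_left (hmul.trans_eq ?_) hc₀
  field_simp
  ring

theorem madgrad_lyapunov_inductive_general (D : ℕ) (G γ : ℝ) (hG : 0 < G)
    (hγ : 0 < γ) (x0 : EuclideanSpace ℝ (Fin D))
    -- support-type function
    (V : (Fin D → ℝ) → EuclideanSpace ℝ (Fin D) → ℝ)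
    (hV : ∀ (b : Fin D → ℝ) (u : EuclideanSpace ℝ (Fin D)),
      V b u = ⨆ x : EuclideanSpace ℝ (Fin D),
        (⟪u, x - x0⟫ - (1 / 2) * ∑ d : Fin D, b d * (x d - x0 d) ^ 2))
    -- step-size and momentum sequences
    (lam c : ℕ → ℝ)
    (hlam : ∀ k : ℕ, lam k = γ * Real.sqrt ((k : ℝ) + 1))
    (hc : ∀ k : ℕ, c k = (3 / 2) / ((k : ℝ) + 3 / 2))
    -- convex losses and subgradients
    (f : ℕ → EuclideanSpace ℝ (Fin D) → ℝ)
    (x z : ℕ → EuclideanSpace ℝ (Fin D))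
    (s v : ℕ → EuclideanSpace ℝ (Fin D)) (a : ℕ → Fin D → ℝ)
    (g : ℕ → EuclideanSpace ℝ (Fin D))
    (hg_subgrad : ∀ k, ∀ y : EuclideanSpace ℝ (Fin D),
      f k (x k) + ⟪g k, y - x k⟫ ≤ f k y)
    -- the MADGRAD recursion
    (hv0 : v 0 = 0)
    (hs : ∀ k : ℕ, s (k + 1) = s k + lam k • g k)
    (hv : ∀ (k : ℕ) (d : Fin D), v (k + 1) d = v k d + lam k * (g k d) ^ 2)
    (ha : ∀ (k : ℕ) (d : Fin D), a k d = (lam k * G ^ 2 + v k d) ^ ((1 : ℝ) / 3))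
    (hz : ∀ (k : ℕ) (d : Fin D), z (k + 1) d = x0 d - s (k + 1) d / a (k + 1) d)
    (hx : ∀ k : ℕ, x (k + 1) = (1 - c (k + 1)) • x k + c (k + 1) • z (k + 1))
    (k : ℕ) (hk : 1 ≤ k) (xstar : EuclideanSpace ℝ (Fin D)) :
    V (a (k + 1)) (-(s (k + 1))) ≤
      V (a k) (-(s k)) + (lam k) ^ 2 / 2 * ∑ d : Fin D, (g k d) ^ 2 / a k d
        + lam k * ⟪g k, x0 - xstar⟫
        - lam k / c k * (f k (x k) - f k xstar)
        + lam k * ((1 - c k) / c k) * (f k (x (k - 1)) - f k xstar) := by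
  obtain ⟨k, rfl⟩ : ∃ m, k = m + 1 := ⟨k - 1, by omega⟩
  have hlam_pos (n : ℕ) : 0 < lam n := by rw [hlam]; positivity
  have hv_mono (d : Fin D) : Monotone fun n => v n d := monotone_nat_of_le_succ fun n => by
    have := hlam_pos n; rw [hv]; simp only [le_add_iff_nonneg_right]; positivity
  have hv_nonneg (n : ℕ) (d : Fin D) : 0 ≤ v n d := by simpa [hv0] using hv_mono d n.zero_le
  have ha_pos (n : ℕ) (d : Fin D) : 0 < a n d := by
    have := hlam_pos n; have := hv_nonneg n d; rw [ha]; positivity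
  have ha_mono (d : Fin D) : a (k + 1) d ≤ a (k + 2) d := by
    have := hlam_pos (k + 1); have := hv_nonneg (k + 1) d
    rw [ha, ha]; gcongr
    · rw [hlam, hlam]; gcongr; norm_num
    · exact hv_mono d (by omega)
  have hV_eq (n : ℕ) : V (a n) (-s n) = 1 / 2 * ∑ d, s n d ^ 2 / a n d := by
    rw [hV, iSup_inner_sub_half_weighted_sq _ _ (ha_pos n)]; simp
  have hc_pos : 0 < c (k + 1) := by rw [hc]; positivity
  have hc_le : c (k + 1) ≤ 1 := by rw [hc, div_le_one (by positivity)]; push_cast; linarith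
  have hmomentum := inner_sub_le_of_subgradient_of_eq_convexComb (y := xstar) hc_pos hc_le
    (hg_subgrad (k + 1)) (hx k)
  calc V (a (k + 2)) (-s (k + 2))
      ≤ 1 / 2 * ∑ d, s (k + 2) d ^ 2 / a (k + 1) d := by
        rw [hV_eq]; gcongr with d; exacts [ha_pos _ d, ha_mono d]
    _ = V (a (k + 1)) (-s (k + 1)) + lam (k + 1) * ⟪g (k + 1), x0 - z (k + 1)⟫
          + lam (k + 1) ^ 2 / 2 * ∑ d, g (k + 1) d ^ 2 / a (k + 1) d := by
        rw [hV_eq, hs, half_sum_sq_add_smul_div _ _ _ _ _ _ (hz k)]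
    _ ≤ _ := by
        have hsplit : x0 - z (k + 1) = (x0 - xstar) + (xstar - z (k + 1)) := by abel
        rw [hsplit, inner_add_right, Nat.add_sub_cancel]
        linear_combination mul_le_mul_of_nonneg_left hmomentum (hlam_pos (k + 1)).le

/-- Lyapunov step, inductive case: for every `k ≥ 1` and every `x_*`,
`V_{a_{k+1}}(−s_{k+1}) ≤ V_{a_k}(−s_k) + (λ_k²/2) ∑_d g_{k,d}²/a_{k,d}
  + λ_k ⟨g_k, x_0 − x_*⟩ − (λ_k/c_k)(f_k(x_k) − f_k(x_*))
  + λ_k ((1 − c_k)/c_k)(f_k(x_{k−1}) − f_k(x_*))`. -/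
theorem madgrad_lyapunov_inductive (D : ℕ) (hD : 1 ≤ D) (G γ : ℝ) (hG : 0 < G)
    (hγ : 0 < γ) (x0 : EuclideanSpace ℝ (Fin D))
    -- support-type function
    (V : (Fin D → ℝ) → EuclideanSpace ℝ (Fin D) → ℝ)
    (hV : ∀ (b : Fin D → ℝ) (u : EuclideanSpace ℝ (Fin D)),
      V b u = ⨆ x : EuclideanSpace ℝ (Fin D),
        (⟪u, x - x0⟫ - (1 / 2) * ∑ d : Fin D, b d * (x d - x0 d) ^ 2))
    -- step-size and momentum sequences
    (lam c : ℕ → ℝ)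
    (hlam : ∀ k : ℕ, lam k = γ * Real.sqrt ((k : ℝ) + 1))
    (hc : ∀ k : ℕ, c k = (3 / 2) / ((k : ℝ) + 3 / 2))
    -- convex losses and subgradients
    (f : ℕ → EuclideanSpace ℝ (Fin D) → ℝ)
    (hf : ∀ k, ConvexOn ℝ Set.univ (f k))
    (x z : ℕ → EuclideanSpace ℝ (Fin D))
    (s v : ℕ → EuclideanSpace ℝ (Fin D)) (a : ℕ → Fin D → ℝ)
    (g : ℕ → EuclideanSpace ℝ (Fin D))
    (hg_subgrad : ∀ k, ∀ y : EuclideanSpace ℝ (Fin D),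
      f k (x k) + ⟪g k, y - x k⟫ ≤ f k y)
    (hg_bound : ∀ k, ∀ d : Fin D, |g k d| ≤ G)
    -- the MADGRAD recursion
    (hx0 : x 0 = x0) (hs0 : s 0 = 0) (hv0 : v 0 = 0)
    (hs : ∀ k : ℕ, s (k + 1) = s k + lam k • g k)
    (hv : ∀ (k : ℕ) (d : Fin D), v (k + 1) d = v k d + lam k * (g k d) ^ 2)
    (ha : ∀ (k : ℕ) (d : Fin D), a k d = (lam k * G ^ 2 + v k d) ^ ((1 : ℝ) / 3))
    (hz : ∀ (k : ℕ) (d : Fin D), z (k + 1) d = x0 d - s (k + 1) d / a (k + 1) d)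
    (hx : ∀ k : ℕ, x (k + 1) = (1 - c (k + 1)) • x k + c (k + 1) • z (k + 1))
    (k : ℕ) (hk : 1 ≤ k) (xstar : EuclideanSpace ℝ (Fin D)) :
    V (a (k + 1)) (-(s (k + 1))) ≤
      V (a k) (-(s k)) + (lam k) ^ 2 / 2 * ∑ d : Fin D, (g k d) ^ 2 / a k d
        + lam k * ⟪g k, x0 - xstar⟫
        - lam k / c k * (f k (x k) - f k xstar)
        + lam k * ((1 - c k) / c k) * (f k (x (k - 1)) - f k xstar) :=
  madgrad_lyapunov_inductive_general D G γ hG hγ x0 V hV lam c hlam hc f x z s v a g hg_subgrad hv0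
    hs hv ha hz hx k hk xstar
end

section
/- Let G > 0, let (λ_t)_{t≥0} be a nondecreasing sequence of strictly positive reals, and let (g_t)_{t≥0} be reals with g_t² ≤ G² for all t. Then for every integer k ≥ 0: ∑_{t=0}^{k} λ_t² g_t² / (λ_t G² + ∑_{i=0}^{t−1} λ_i g_i²)^{1/3} ≤ (3/2) λ_k (∑_{i=0}^{k} λ_i g_i²)^{2/3}. -/
/-!
Write `A t = ∑_{i<t} λ_i g_i²`. Since `λ_t g_t² ≤ λ_t G²`, the `t`-th term is at most
`λ_t a / (A t + a)^{1/3}` with `a = λ_t g_t²`, and `λ_t ≤ λ_k`. With cube roots `u ≥ v ≥ 0` of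
`A t + a` and `A t`, the inequality `u³ - v³ ≤ (3/2) u (u² - v²)`, i.e. `0 ≤ (u - v)² (u + 2v)`,
bounds `a / (A t + a)^{1/3}` by `(3/2) ((A t + a)^{2/3} - (A t)^{2/3})`, and these increments
telescope to `(3/2) (A (k+1))^{2/3}`.
-/

open Finset

lemma cube_sub_cube_le (u v : ℝ) (hv : 0 ≤ v) (hvu : v ≤ u) :
    u ^ 3 - v ^ 3 ≤ 3 / 2 * u * (u ^ 2 - v ^ 2) := by
  nlinarith [mul_nonneg (sq_nonneg (u - v)) (by linarith : 0 ≤ u + 2 * v)]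

lemma rpow_one_third_pow_three {x : ℝ} (hx : 0 ≤ x) : (x ^ ((1 : ℝ) / 3)) ^ 3 = x := by
  rw [← Real.rpow_natCast, ← Real.rpow_mul hx]
  norm_num

lemma rpow_two_thirds_eq_sq {x : ℝ} (hx : 0 ≤ x) :
    x ^ ((2 : ℝ) / 3) = (x ^ ((1 : ℝ) / 3)) ^ 2 := by
  rw [← Real.rpow_natCast, ← Real.rpow_mul hx]
  norm_num

lemma div_rpow_one_third_le_sub_rpow_two_thirds {x a : ℝ} (hx : 0 ≤ x) (ha : 0 ≤ a) :
    a / (x + a) ^ ((1 : ℝ) / 3) ≤ 3 / 2 * ((x + a) ^ ((2 : ℝ) / 3) - x ^ ((2 : ℝ) / 3)) := by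
  rcases (add_nonneg hx ha).eq_or_lt with hxa | hxa
  · rw [← hxa, show a = 0 by linarith, zero_div, show x = 0 by linarith]
    simp
  set u := (x + a) ^ ((1 : ℝ) / 3)
  set v := x ^ ((1 : ℝ) / 3)
  have hu : 0 < u := Real.rpow_pos_of_pos hxa _
  have hvu : v ≤ u := Real.rpow_le_rpow hx (by linarith) (by norm_num)
  have ha_eq : a = u ^ 3 - v ^ 3 := by
    rw [rpow_one_third_pow_three hxa.le, rpow_one_third_pow_three hx]; ring
  rw [rpow_two_thirds_eq_sq hxa.le, rpow_two_thirds_eq_sq hx, div_le_iff₀ hu]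
  linarith [cube_sub_cube_le u v (Real.rpow_nonneg hx _) hvu]

lemma div_rpow_one_third_le_sub_rpow_two_thirds_of_le {x a b : ℝ} (hx : 0 ≤ x) (ha : 0 ≤ a)
    (hab : a ≤ b) :
    a / (b + x) ^ ((1 : ℝ) / 3) ≤ 3 / 2 * ((x + a) ^ ((2 : ℝ) / 3) - x ^ ((2 : ℝ) / 3)) := by
  refine le_trans ?_ (div_rpow_one_third_le_sub_rpow_two_thirds hx ha)
  rcases ha.eq_or_lt with rfl | ha
  · simp
  exact div_le_div_of_nonneg_left ha.le (Real.rpow_pos_of_pos (by linarith) _)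
    (Real.rpow_le_rpow (by linarith) (by linarith) (by norm_num))

lemma sum_div_rpow_one_third_le (a b : ℕ → ℝ) (ha : ∀ t, 0 ≤ a t) (hab : ∀ t, a t ≤ b t)
    (n : ℕ) :
    ∑ t ∈ range n, a t / (b t + ∑ i ∈ range t, a i) ^ ((1 : ℝ) / 3)
      ≤ 3 / 2 * (∑ i ∈ range n, a i) ^ ((2 : ℝ) / 3) := by
  set A : ℕ → ℝ := fun t => ∑ i ∈ range t, a i
  have hA : ∀ t, 0 ≤ A t := fun t => sum_nonneg fun i _ => ha i
  calc ∑ t ∈ range n, a t / (b t + A t) ^ ((1 : ℝ) / 3)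
      ≤ ∑ t ∈ range n, 3 / 2 * (A (t + 1) ^ ((2 : ℝ) / 3) - A t ^ ((2 : ℝ) / 3)) := by
        refine sum_le_sum fun t _ => ?_
        rw [show A (t + 1) = A t + a t from sum_range_succ a t]
        exact div_rpow_one_third_le_sub_rpow_two_thirds_of_le (hA t) (ha t) (hab t)
    _ = 3 / 2 * A n ^ ((2 : ℝ) / 3) := by
        rw [← mul_sum, sum_range_sub (fun t => A t ^ ((2 : ℝ) / 3))]
        simp [A]

theorem error_sum_bound_general (G : ℝ) (lam : ℕ → ℝ)
    (hpos : ∀ t, 0 < lam t) (hmono : Monotone lam)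
    (g : ℕ → ℝ) (hb : ∀ t, (g t) ^ 2 ≤ G ^ 2) (k : ℕ) :
    ∑ t ∈ Finset.range (k + 1),
        (lam t) ^ 2 * (g t) ^ 2 /
          (lam t * G ^ 2 + ∑ i ∈ Finset.range t, lam i * (g i) ^ 2) ^ ((1 : ℝ) / 3)
      ≤ (3 / 2) * lam k * (∑ i ∈ Finset.range (k + 1), lam i * (g i) ^ 2) ^ ((2 : ℝ) / 3) := by
  set a : ℕ → ℝ := fun t => lam t * g t ^ 2
  set c : ℕ → ℝ := fun t => a t / (lam t * G ^ 2 + ∑ i ∈ range t, a i) ^ ((1 : ℝ) / 3)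
  have hc : ∀ t, 0 ≤ c t := fun t =>
    div_nonneg (mul_nonneg (hpos t).le (sq_nonneg _)) (Real.rpow_nonneg
      (add_nonneg (mul_nonneg (hpos t).le (sq_nonneg _))
        (sum_nonneg fun i _ => mul_nonneg (hpos i).le (sq_nonneg _))) _)
  calc ∑ t ∈ range (k + 1), lam t ^ 2 * g t ^ 2 /
        (lam t * G ^ 2 + ∑ i ∈ range t, a i) ^ ((1 : ℝ) / 3)
      = ∑ t ∈ range (k + 1), lam t * c t := sum_congr rfl fun t _ => by simp only [c, a]; ring
    _ ≤ ∑ t ∈ range (k + 1), lam k * c t := sum_le_sum fun t ht =>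
        mul_le_mul_of_nonneg_right (hmono (Nat.lt_succ_iff.mp (mem_range.mp ht))) (hc t)
    _ = lam k * ∑ t ∈ range (k + 1), c t := (mul_sum _ _ _).symm
    _ ≤ lam k * (3 / 2 * (∑ i ∈ range (k + 1), a i) ^ ((2 : ℝ) / 3)) :=
        mul_le_mul_of_nonneg_left
          (sum_div_rpow_one_third_le a (fun t => lam t * G ^ 2)
            (fun t => mul_nonneg (hpos t).le (sq_nonneg _))
            (fun t => mul_le_mul_of_nonneg_left (hb t) (hpos t).le) _)
          (hpos k).le
    _ = 3 / 2 * lam k * (∑ i ∈ range (k + 1), a i) ^ ((2 : ℝ) / 3) := by ring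

/-- Let `G > 0`, `(λ_t)` nondecreasing strictly positive, `g_t² ≤ G²`. Then for every `k ≥ 0`:
`∑_{t=0}^{k} λ_t² g_t² / (λ_t G² + ∑_{i=0}^{t−1} λ_i g_i²)^{1/3}
  ≤ (3/2) λ_k (∑_{i=0}^{k} λ_i g_i²)^{2/3}`. -/
theorem error_sum_bound (G : ℝ) (hG : 0 < G) (lam : ℕ → ℝ)
    (hpos : ∀ t, 0 < lam t) (hmono : Monotone lam)
    (g : ℕ → ℝ) (hb : ∀ t, (g t) ^ 2 ≤ G ^ 2) (k : ℕ) :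
    ∑ t ∈ Finset.range (k + 1),
        (lam t) ^ 2 * (g t) ^ 2 /
          (lam t * G ^ 2 + ∑ i ∈ Finset.range t, lam i * (g i) ^ 2) ^ ((1 : ℝ) / 3)
      ≤ (3 / 2) * lam k * (∑ i ∈ Finset.range (k + 1), lam i * (g i) ^ 2) ^ ((2 : ℝ) / 3) :=
  error_sum_bound_general G lam hpos hmono g hb k
end

section
/- Let 0 < r < 1 and j ≥ 0 be reals, and define c_k := (r + 1)/(k + j + r). Then for every integer k ≥ 1: ((1 − c_k)/c_k) · (k + j)^r ≤ (1/c_{k−1}) · (k + j − 1)^r. -/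
/-- Bernoulli's inequality `(1 + 1/x)^r ≤ 1 + r/x`, cleared of denominators. -/
lemma mul_add_one_rpow_le {r x : ℝ} (hr0 : 0 ≤ r) (hr1 : r ≤ 1) (hx : 0 ≤ x) :
    x * (x + 1) ^ r ≤ (x + r) * x ^ r := by
  rcases hx.eq_or_lt with rfl | hx
  · simp only [zero_mul, zero_add]
    positivity
  have bernoulli : (1 + x⁻¹) ^ r ≤ 1 + r * x⁻¹ :=
    rpow_one_add_le_one_add_mul_self (by linarith [inv_pos.2 hx]) hr0 hr1
  calc x * (x + 1) ^ r = x * x ^ r * (1 + x⁻¹) ^ r := by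
        rw [mul_assoc, ← Real.mul_rpow hx.le (by positivity), mul_add, mul_inv_cancel₀ hx.ne',
          mul_one]
    _ ≤ x * x ^ r * (1 + r * x⁻¹) := by gcongr
    _ = (x + r) * x ^ r := by field_simp

/-- Let `0 < r < 1` and `j ≥ 0` be reals, and define `c_k := (r+1)/(k+j+r)`.
Then for every integer `k ≥ 1`:
`((1 − c_k)/c_k) (k+j)^r ≤ (1/c_{k−1}) (k+j−1)^r`. -/
theorem ck_iterate_weighting (r j : ℝ) (hr0 : 0 < r) (hr1 : r < 1) (hj : 0 ≤ j)
    (c : ℕ → ℝ) (hc : ∀ k : ℕ, c k = (r + 1) / ((k : ℝ) + j + r))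
    (k : ℕ) (hk : 1 ≤ k) :
    ((1 - c k) / c k) * ((k : ℝ) + j) ^ r
      ≤ (1 / c (k - 1)) * ((k : ℝ) + j - 1) ^ r := by
  set x : ℝ := (k : ℝ) + j - 1 with hx_def
  have hk1 : (1 : ℝ) ≤ k := by exact_mod_cast hk
  have hx : 0 ≤ x := by linarith
  have hck : (1 - c k) / c k = x / (r + 1) := by
    rw [hc k]
    field_simp
    ring
  have hck_pred : 1 / c (k - 1) = (x + r) / (r + 1) := by
    rw [hc (k - 1), Nat.cast_sub hk, Nat.cast_one, one_div_div, hx_def]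
    ring
  rw [hck, hck_pred, show (k : ℝ) + j = x + 1 by ring, div_mul_eq_mul_div, div_mul_eq_mul_div]
  exact div_le_div_of_nonneg_right (mul_add_one_rpow_le hr0.le hr1.le hx) (by linarith)
end
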